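/- Let N ≥ 2 be an integer and q = exp(πi/N). For every integer s with 1 ≤ s ≤ N−1, ∑_{l=1}^{N−s−1} 1/([l]·[N−s−l]) = −[s]⁻¹ · ∑_{l=s+1}^{N−1} {l}_+/[l]. -/

import Mathlib

/-!
With `c(l) = {l}_+ / [l]`, the identity `{a}_+ {b} - {b}_+ {a} = 2 {b - a}` is the partial
fraction decomposition `1 / ([l] [s + l]) = (c(l) - c(s + l)) / (2 [s])`. Since `q^N = -1`,
`[N - k] = [k]` and `c(N - k) = -c(k)`; so the left-hand side, whose terms are
`1 / ([l] [s + l])`, splits into two sums of `c`, and both become `∑_{l=s+1}^{N-1} c(l)`,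
one by reflecting `l ↦ N - l` (with a sign) and one by shifting `l ↦ s + l`.
-/

open Complex Finset

/-- `q = exp(π i / N)`. -/
noncomputable def qq (N : ℕ) : ℂ := Complex.exp (Real.pi * Complex.I / N)

/-- The quantum integer `[k] = (q^k - q^{-k}) / (q - q^{-1})`. -/
noncomputable def qint (N : ℕ) (k : ℤ) : ℂ :=
  (qq N ^ k - qq N ^ (-k)) / (qq N - (qq N)⁻¹)

theorem Finset.sum_Icc_int_const_sub {M : Type*} [AddCommMonoid M] (f : ℤ → M) (n a b : ℤ) :
    ∑ l ∈ Icc a b, f (n - l) = ∑ l ∈ Icc (n - b) (n - a), f l :=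
  sum_nbij' (n - ·) (n - ·) (by intro l; simp only [mem_Icc]; omega)
    (by intro l; simp only [mem_Icc]; omega) (by intro l _; omega)
    (by intro l _; omega) (fun _ _ => rfl)

theorem Finset.sum_Icc_add_left {α M : Type*} [AddCommMonoid α] [PartialOrder α]
    [IsOrderedCancelAddMonoid α] [ExistsAddOfLE α] [LocallyFiniteOrder α] [AddCommMonoid M]
    (f : α → M) (a b c : α) : ∑ x ∈ Icc a b, f (c + x) = ∑ x ∈ Icc (c + a) (c + b), f x := by
  rw [← map_add_left_Icc, sum_map]
  rfl

section Field

variable {K : Type*} [Field K] {q : K}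

theorem zpow_add_zpow_neg_mul_sub (hq : q ≠ 0) (a b : ℤ) :
    (q ^ a + q ^ (-a)) * (q ^ b - q ^ (-b)) - (q ^ b + q ^ (-b)) * (q ^ a - q ^ (-a)) =
      2 * (q ^ (b - a) - q ^ (-(b - a))) := by
  simp only [zpow_neg, neg_sub, zpow_sub₀ hq]
  field_simp
  ring

theorem IsPrimitiveRoot.zpow_sub_zpow_neg_ne_zero {N : ℕ} (h : IsPrimitiveRoot q (2 * N))
    {k : ℤ} (hk0 : 0 < k) (hkN : k < N) : q ^ k - q ^ (-k) ≠ 0 := by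
  have hq : q ≠ 0 := h.ne_zero (by omega)
  rw [sub_ne_zero, Ne, ← mul_right_inj' (zpow_ne_zero k hq), ← zpow_add₀ hq, ← zpow_add₀ hq,
    add_neg_cancel, zpow_zero, ← two_mul, h.zpow_eq_one_iff_dvd]
  push_cast
  rintro ⟨m, hm⟩
  exact hkN.not_ge (Int.le_of_dvd hk0 ⟨m, by linarith⟩)

theorem IsPrimitiveRoot.pow_eq_neg_one {N : ℕ} (h : IsPrimitiveRoot q (2 * N)) (hN : N ≠ 0) :
    q ^ N = -1 := by
  have h2 := h.pow_of_dvd hN (dvd_mul_left N 2)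
  rw [Nat.mul_div_cancel _ (Nat.pos_of_ne_zero hN)] at h2
  exact h2.eq_neg_one_of_two_right

theorem zpow_natCast_sub_sub_zpow_neg {N : ℕ} (hq : q ≠ 0) (hqN : q ^ N = -1) (k : ℤ) :
    q ^ ((N : ℤ) - k) - q ^ (-((N : ℤ) - k)) = q ^ k - q ^ (-k) := by
  simp only [neg_sub, zpow_sub₀ hq, zpow_natCast, hqN, zpow_neg]
  field_simp
  ring

theorem zpow_natCast_sub_add_zpow_neg {N : ℕ} (hq : q ≠ 0) (hqN : q ^ N = -1) (k : ℤ) :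
    q ^ ((N : ℤ) - k) + q ^ (-((N : ℤ) - k)) = -(q ^ k + q ^ (-k)) := by
  simp only [neg_sub, zpow_sub₀ hq, zpow_natCast, hqN, zpow_neg]
  field_simp
  ring

end Field

theorem isPrimitiveRoot_qq {N : ℕ} (hN : N ≠ 0) : IsPrimitiveRoot (qq N) (2 * N) := by
  convert Complex.isPrimitiveRoot_exp (2 * N) (by omega) using 2
  rw [qq]
  push_cast
  field_simp

theorem qq_ne_zero (N : ℕ) : qq N ≠ 0 := exp_ne_zero _

theorem qq_pow_self {N : ℕ} (hN : N ≠ 0) : qq N ^ N = -1 :=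
  (isPrimitiveRoot_qq hN).pow_eq_neg_one hN

theorem qint_ne_zero {N : ℕ} {k : ℤ} (hk0 : 0 < k) (hkN : k < N) : qint N k ≠ 0 := by
  have h := isPrimitiveRoot_qq (N := N) (by omega)
  refine div_ne_zero (h.zpow_sub_zpow_neg_ne_zero hk0 hkN) ?_
  simpa using h.zpow_sub_zpow_neg_ne_zero (k := 1) one_pos (by omega)

theorem qint_natCast_sub {N : ℕ} (hN : N ≠ 0) (k : ℤ) : qint N (N - k) = qint N k := by
  rw [qint, qint, zpow_natCast_sub_sub_zpow_neg (qq_ne_zero N) (qq_pow_self hN)]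

/-- `{l}_+ / [l] = 2 sin (π / N) cot (π l / N)`. -/
noncomputable def qcot (N : ℕ) (l : ℤ) : ℂ := (qq N ^ l + qq N ^ (-l)) / qint N l

theorem qcot_natCast_sub {N : ℕ} (hN : N ≠ 0) (k : ℤ) : qcot N (N - k) = -qcot N k := by
  rw [qcot, qcot, zpow_natCast_sub_add_zpow_neg (qq_ne_zero N) (qq_pow_self hN),
    qint_natCast_sub hN, neg_div]

theorem qcot_sub_qcot {N : ℕ} {a b : ℤ} (ha : qint N a ≠ 0) (hb : qint N b ≠ 0) :
    qcot N a - qcot N b = 2 * qint N (b - a) / (qint N a * qint N b) := by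
  have hcross := zpow_add_zpow_neg_mul_sub (qq_ne_zero N) a b
  unfold qcot qint at *
  generalize qq N ^ a - qq N ^ (-a) = Ba at *
  generalize qq N ^ b - qq N ^ (-b) = Bb at *
  generalize qq N - (qq N)⁻¹ = e at *
  obtain ⟨ha', he⟩ := div_ne_zero_iff.1 ha
  have hb' := (div_ne_zero_iff.1 hb).1
  field_simp
  linear_combination hcross

theorem one_div_qint_mul_qint_natCast_sub {N : ℕ} {s l : ℤ} (hs : 0 < s) (hl : 0 < l)
    (hsl : s + l < N) :
    1 / (qint N l * qint N (N - s - l)) = (qint N s)⁻¹ * ((qcot N l - qcot N (s + l)) / 2) := by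
  have hs' := qint_ne_zero hs (by omega : s < N)
  rw [sub_sub, qint_natCast_sub (by omega),
    qcot_sub_qcot (qint_ne_zero hl (by omega)) (qint_ne_zero (by omega) hsl), add_sub_cancel_right]
  field_simp

theorem sum_Icc_qcot_reflect {N : ℕ} (hN : N ≠ 0) (s : ℤ) :
    ∑ l ∈ Icc 1 ((N : ℤ) - s - 1), qcot N l = -∑ l ∈ Icc (s + 1) ((N : ℤ) - 1), qcot N l := by
  rw [← sum_neg_distrib]
  simp_rw [← qcot_natCast_sub hN]
  rw [sum_Icc_int_const_sub (qcot N), sub_sub_cancel, sub_add_eq_sub_sub]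

theorem stmt2_general (N : ℕ) (s : ℤ) (hs1 : 1 ≤ s) (hs : s ≤ (N : ℤ) - 1) :
    ∑ l ∈ Finset.Icc 1 ((N : ℤ) - s - 1), 1 / (qint N l * qint N ((N : ℤ) - s - l)) =
      -(qint N s)⁻¹ * ∑ l ∈ Finset.Icc (s + 1) ((N : ℤ) - 1),
        (qq N ^ l + qq N ^ (-l)) / qint N l := by
  have hN : N ≠ 0 := by omega
  have hshift : ∑ l ∈ Icc 1 ((N : ℤ) - s - 1), qcot N (s + l) =
      ∑ l ∈ Icc (s + 1) ((N : ℤ) - 1), qcot N l := by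
    rw [sum_Icc_add_left, add_comm s 1]
    congr 2
    ring
  calc _ = ∑ l ∈ Icc 1 ((N : ℤ) - s - 1), (qint N s)⁻¹ * ((qcot N l - qcot N (s + l)) / 2) :=
        sum_congr rfl fun l hl ↦ by
          rw [mem_Icc] at hl
          exact one_div_qint_mul_qint_natCast_sub (by omega) (by omega) (by omega)
    _ = (qint N s)⁻¹ * ((∑ l ∈ Icc 1 ((N : ℤ) - s - 1), qcot N l -
          ∑ l ∈ Icc 1 ((N : ℤ) - s - 1), qcot N (s + l)) / 2) := by
        rw [← mul_sum, ← sum_div, sum_sub_distrib]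
    _ = -(qint N s)⁻¹ * ∑ l ∈ Icc (s + 1) ((N : ℤ) - 1), qcot N l := by
        rw [sum_Icc_qcot_reflect hN, hshift]
        ring

theorem stmt2 (N : ℕ) (hN : 2 ≤ N) (s : ℤ) (hs1 : 1 ≤ s) (hs : s ≤ (N : ℤ) - 1) :
    ∑ l ∈ Finset.Icc 1 ((N : ℤ) - s - 1), 1 / (qint N l * qint N ((N : ℤ) - s - l)) =
      -(qint N s)⁻¹ * ∑ l ∈ Finset.Icc (s + 1) ((N : ℤ) - 1),
        (qq N ^ l + qq N ^ (-l)) / qint N l :=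
  stmt2_general N s hs1 hs
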